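/- Let 𝔩 be the Lie algebra with brackets [E₀,E₁] = -a₁E₁ - a₂E₂, [E₀,E₂] = -a₂E₁ + a₁E₂, [E₁,E₂] = 0 for real constants a₁, a₂, and g the standard B-metric. Writing μ = a₁ and ν = -2a₂, the nonzero covariant derivatives are ∇_{E₀}E₁ = (ν/2)E₂, ∇_{E₀}E₂ = (ν/2)E₁, ∇_{E₁}E₀ = μE₁, ∇_{E₂}E₀ = -μE₂, ∇_{E₁}E₁ = ∇_{E₂}E₂ = -μE₀, and the curvature satisfies R(E₀,E₁,E₁,E₀) = -μ², R(E₀,E₂,E₂,E₀) = μ², R(E₁,E₂,E₂,E₁) = -μ², R(E₀,E₁,E₂,E₀) = μν. -/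

import Mathlib

/-!
The Koszul formula pins down `g(∇_{Eᵢ}Eⱼ, Eₖ)` for every `k`, and `g` is nondegenerate on the
basis, so `∇` is determined on basis vectors; the curvature components then follow by expanding
`∇_{Eᵢ}∇_{Eⱼ}Eₖ - ∇_{Eⱼ}∇_{Eᵢ}Eₖ - ∇_{[Eᵢ,Eⱼ]}Eₖ` bilinearly.
-/

noncomputable section

/-- Standard basis of ℝ³. -/
def E3 (i : Fin 3) : Fin 3 → ℝ := Pi.single i 1

/-- The B-metric g with g(e₀,e₀)=g(e₁,e₁)=1, g(e₂,e₂)=-1, off-diagonal zero. -/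
def gB (x y : Fin 3 → ℝ) : ℝ := x 0 * y 0 + x 1 * y 1 - x 2 * y 2

/-- The endomorphism φ: φe₀ = 0, φe₁ = e₂, φe₂ = -e₁. -/
def phi3 (x : Fin 3 → ℝ) : Fin 3 → ℝ := ![0, -x 2, x 1]

/-- The 1-form η = e₀*. -/
def eta3 (x : Fin 3 → ℝ) : ℝ := x 0
/-- Curvature tensor R(x,y)z = ∇ₓ∇ᵧz - ∇ᵧ∇ₓz - ∇_{[x,y]}z of a bilinear connection. -/
def curv (nabla : (Fin 3 → ℝ) →ₗ[ℝ] (Fin 3 → ℝ) →ₗ[ℝ] (Fin 3 → ℝ))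
    (br : (Fin 3 → ℝ) → (Fin 3 → ℝ) → (Fin 3 → ℝ)) (x y z : Fin 3 → ℝ) : Fin 3 → ℝ :=
  nabla x (nabla y z) - nabla y (nabla x z) - nabla (br x y) z

/-- Curvature components R(Eᵢ,Eⱼ,Eₖ,Eₗ) = g(R(Eᵢ,Eⱼ)Eₖ, Eₗ). -/
def Rc (nabla : (Fin 3 → ℝ) →ₗ[ℝ] (Fin 3 → ℝ) →ₗ[ℝ] (Fin 3 → ℝ))
    (br : (Fin 3 → ℝ) → (Fin 3 → ℝ) → (Fin 3 → ℝ)) (i j k l : Fin 3) : ℝ :=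
  gB (curv nabla br (E3 i) (E3 j) (E3 k)) (E3 l)

/-- Ricci tensor ρⱼₖ = R₀ⱼₖ₀ + R₁ⱼₖ₁ - R₂ⱼₖ₂. -/
def ricci (nabla : (Fin 3 → ℝ) →ₗ[ℝ] (Fin 3 → ℝ) →ₗ[ℝ] (Fin 3 → ℝ))
    (br : (Fin 3 → ℝ) → (Fin 3 → ℝ) → (Fin 3 → ℝ)) (j k : Fin 3) : ℝ :=
  Rc nabla br 0 j k 0 + Rc nabla br 1 j k 1 - Rc nabla br 2 j k 2

/-- Scalar curvature τ = ρ₀₀ + ρ₁₁ - ρ₂₂. -/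
def scal (nabla : (Fin 3 → ℝ) →ₗ[ℝ] (Fin 3 → ℝ) →ₗ[ℝ] (Fin 3 → ℝ))
    (br : (Fin 3 → ℝ) → (Fin 3 → ℝ) → (Fin 3 → ℝ)) : ℝ :=
  ricci nabla br 0 0 + ricci nabla br 1 1 - ricci nabla br 2 2

/-- The F₉⊕F₁₀ example bracket: [E₀,E₁] = -a₁E₁ - a₂E₂, [E₀,E₂] = -a₂E₁ + a₁E₂, [E₁,E₂] = 0. -/
def brEx (a1 a2 : ℝ) (x y : Fin 3 → ℝ) : Fin 3 → ℝ :=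
  ![0, -a1 * (x 0 * y 1 - x 1 * y 0) - a2 * (x 0 * y 2 - x 2 * y 0),
    -a2 * (x 0 * y 1 - x 1 * y 0) + a1 * (x 0 * y 2 - x 2 * y 0)]

@[simp]
lemma E3_apply_self (i : Fin 3) : E3 i i = 1 := Pi.single_eq_same i 1

@[simp]
lemma gB_E3_zero (v : Fin 3 → ℝ) : gB v (E3 0) = v 0 := by simp [gB, E3]

@[simp]
lemma gB_E3_one (v : Fin 3 → ℝ) : gB v (E3 1) = v 1 := by simp [gB, E3]

@[simp]
lemma gB_E3_two (v : Fin 3 → ℝ) : gB v (E3 2) = -v 2 := by simp [gB, E3]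

lemma eq_of_gB_E3 {v w : Fin 3 → ℝ} (h : ∀ k, gB v (E3 k) = gB w (E3 k)) : v = w := by
  funext k
  fin_cases k
  · simpa using h 0
  · simpa using h 1
  · simpa using h 2

def exNabla (a1 a2 : ℝ) : Fin 3 → Fin 3 → Fin 3 → ℝ :=
  ![![0, -a2 • E3 2, -a2 • E3 1],
    ![a1 • E3 1, -a1 • E3 0, 0],
    ![-a1 • E3 2, 0, -a1 • E3 0]]

lemma brEx_E3_zero_one (a1 a2 : ℝ) :
    brEx a1 a2 (E3 0) (E3 1) = (-a1) • E3 1 + (-a2) • E3 2 := by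
  funext k; fin_cases k <;> simp [brEx, E3]

lemma brEx_E3_zero_two (a1 a2 : ℝ) :
    brEx a1 a2 (E3 0) (E3 2) = (-a2) • E3 1 + a1 • E3 2 := by
  funext k; fin_cases k <;> simp [brEx, E3]

lemma brEx_E3_one_two (a1 a2 : ℝ) : brEx a1 a2 (E3 1) (E3 2) = 0 := by
  funext k; fin_cases k <;> simp [brEx, E3]

section Connection

variable {a1 a2 : ℝ} {nabla : (Fin 3 → ℝ) →ₗ[ℝ] (Fin 3 → ℝ) →ₗ[ℝ] (Fin 3 → ℝ)}

theorem nabla_E3_eq_exNabla_of_koszul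
    (hK : ∀ i j k : Fin 3, 2 * gB (nabla (E3 i) (E3 j)) (E3 k) =
      gB (brEx a1 a2 (E3 i) (E3 j)) (E3 k) + gB (brEx a1 a2 (E3 k) (E3 i)) (E3 j)
        + gB (brEx a1 a2 (E3 k) (E3 j)) (E3 i))
    (i j : Fin 3) : nabla (E3 i) (E3 j) = exNabla a1 a2 i j := by
  refine eq_of_gB_E3 fun k => ?_
  have hijk := hK i j k
  fin_cases i <;> fin_cases j <;> fin_cases k <;>
    simp [gB, exNabla, brEx, E3] at hijk ⊢ <;> linarith

variable (hN : ∀ i j, nabla (E3 i) (E3 j) = exNabla a1 a2 i j)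
include hN

lemma Rc_zero_one_one_zero : Rc nabla (brEx a1 a2) 0 1 1 0 = -a1 ^ 2 := by
  simp [Rc, curv, hN, exNabla, brEx_E3_zero_one, sq]

lemma Rc_zero_two_two_zero : Rc nabla (brEx a1 a2) 0 2 2 0 = a1 ^ 2 := by
  simp [Rc, curv, hN, exNabla, brEx_E3_zero_two, sq]

lemma Rc_one_two_two_one : Rc nabla (brEx a1 a2) 1 2 2 1 = -a1 ^ 2 := by
  simp [Rc, curv, hN, exNabla, brEx_E3_one_two, sq]

lemma Rc_zero_one_two_zero : Rc nabla (brEx a1 a2) 0 1 2 0 = a1 * (-2 * a2) := by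
  simp [Rc, curv, hN, exNabla, brEx_E3_zero_one]
  ring

end Connection

/-- covariant derivatives and curvature of the F₉⊕F₁₀ example,
with μ = a₁, ν = -2a₂. -/
theorem example_curvature (a1 a2 μ ν : ℝ) (hμ : μ = a1) (hν : ν = -2 * a2)
    (nabla : (Fin 3 → ℝ) →ₗ[ℝ] (Fin 3 → ℝ) →ₗ[ℝ] (Fin 3 → ℝ))
    (hK : ∀ i j k : Fin 3, 2 * gB (nabla (E3 i) (E3 j)) (E3 k) =
      gB (brEx a1 a2 (E3 i) (E3 j)) (E3 k) + gB (brEx a1 a2 (E3 k) (E3 i)) (E3 j)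
        + gB (brEx a1 a2 (E3 k) (E3 j)) (E3 i)) :
    nabla (E3 0) (E3 1) = (ν / 2) • E3 2 ∧ nabla (E3 0) (E3 2) = (ν / 2) • E3 1 ∧
    nabla (E3 1) (E3 0) = μ • E3 1 ∧ nabla (E3 2) (E3 0) = -μ • E3 2 ∧
    nabla (E3 1) (E3 1) = -μ • E3 0 ∧ nabla (E3 2) (E3 2) = -μ • E3 0 ∧
    Rc nabla (brEx a1 a2) 0 1 1 0 = -μ ^ 2 ∧ Rc nabla (brEx a1 a2) 0 2 2 0 = μ ^ 2 ∧
    Rc nabla (brEx a1 a2) 1 2 2 1 = -μ ^ 2 ∧ Rc nabla (brEx a1 a2) 0 1 2 0 = μ * ν := by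
  subst hμ hν
  have hN := nabla_E3_eq_exNabla_of_koszul hK
  have hν2 : -2 * a2 / 2 = -a2 := by ring
  refine ⟨?_, ?_, ?_, ?_, ?_, ?_, Rc_zero_one_one_zero hN, Rc_zero_two_two_zero hN,
    Rc_one_two_two_one hN, Rc_zero_one_two_zero hN⟩
  all_goals simp only [hN, exNabla, hν2, Matrix.cons_val_zero, Matrix.cons_val_one,
    Matrix.cons_val_two, Matrix.head_cons, Matrix.tail_cons]
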